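/- arXiv:2004.11580 — 2 statements merged into one kernel-verified Lean document; each statement's English description precedes it below -/
import Mathlib

section
/- For a positive semidefinite Hermitian matrix A, equality det(I + A) = 1 + Tr(A) holds if and only if rank(A) ≤ 1. -/
open scoped ComplexOrder

open Finset in
lemma aux_prod_one_add {ι : Type*} (x : ι → ℝ) (s : Finset ι) (h : ∀ i ∈ s, 0 ≤ x i) :
    (1 + ∑ i ∈ s, x i ≤ ∏ i ∈ s, (1 + x i)) ∧
    ((∏ i ∈ s, (1 + x i) = 1 + ∑ i ∈ s, x i) ↔
      ∀ i ∈ s, ∀ j ∈ s, i ≠ j → x i = 0 ∨ x j = 0) := by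
  induction s using Finset.cons_induction with
  | empty => simp
  | cons a s ha ih =>
    have hx : ∀ i ∈ s, 0 ≤ x i := fun i hi => h i (mem_cons_of_mem hi)
    have hxa : 0 ≤ x a := h a (mem_cons_self a s)
    obtain ⟨ih1, ih2⟩ := ih hx
    have hS : 0 ≤ ∑ i ∈ s, x i := Finset.sum_nonneg hx
    have hP1 : (1:ℝ) ≤ ∏ i ∈ s, (1 + x i) := le_trans (by linarith) ih1
    rw [Finset.prod_cons, Finset.sum_cons]
    constructor
    · nlinarith [mul_le_mul_of_nonneg_left ih1 hxa]
    · constructor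
      · intro heq
        -- equality forces P = 1 + S and x a * (P - 1) = 0
        have h1 : (∏ i ∈ s, (1 + x i)) = 1 + ∑ i ∈ s, x i ∧
            x a * ((∏ i ∈ s, (1 + x i)) - 1) = 0 := by
          constructor <;> nlinarith [mul_nonneg hxa (sub_nonneg.2 hP1)]
        obtain ⟨hPS, hzero⟩ := h1
        rcases mul_eq_zero.1 hzero with h0 | h0
        · intro i hi j hj hij
          rcases mem_cons.1 hi with rfl | hi' <;> rcases mem_cons.1 hj with rfl | hj'
          · exact absurd rfl hij
          · exact Or.inl h0
          · exact Or.inr h0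
          · exact ih2.1 hPS i hi' j hj' hij
        · -- P = 1, so S = 0, so all x i = 0 on s
          have hS0 : ∑ i ∈ s, x i = 0 := by rw [hPS] at h0; linarith
          have hall : ∀ i ∈ s, x i = 0 :=
            (Finset.sum_eq_zero_iff_of_nonneg hx).1 hS0
          intro i hi j hj hij
          rcases mem_cons.1 hi with rfl | hi'
          · rcases mem_cons.1 hj with rfl | hj'
            · exact absurd rfl hij
            · exact Or.inr (hall j hj')
          · exact Or.inl (hall i hi')
      · intro hpw
        by_cases h0 : x a = 0
        · have : ∀ i ∈ s, ∀ j ∈ s, i ≠ j → x i = 0 ∨ x j = 0 := fun i hi j hj hij =>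
            hpw i (mem_cons_of_mem hi) j (mem_cons_of_mem hj) hij
          rw [h0, ih2.2 this]; ring
        · have hall : ∀ i ∈ s, x i = 0 := by
            intro i hi
            rcases hpw a (mem_cons_self a s) i (mem_cons_of_mem hi)
              (fun hne => ha (hne ▸ hi)) with h | h
            · exact absurd h h0
            · exact h
          rw [Finset.prod_eq_one (fun i hi => by rw [hall i hi, add_zero]),
            Finset.sum_eq_zero hall]
          ring

theorem det_one_add_eq_one_add_trace_iff_rank_le_one {n : ℕ}
    (A : Matrix (Fin n) (Fin n) ℂ) (hA : A.PosSemidef) :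
    (1 + A).det = 1 + A.trace ↔ A.rank ≤ 1 := by
  have hH := hA.isHermitian
  set U : Matrix (Fin n) (Fin n) ℂ := (hH.eigenvectorUnitary : Matrix (Fin n) (Fin n) ℂ)
  have hU : U ∈ Matrix.unitaryGroup (Fin n) ℂ := hH.eigenvectorUnitary.2
  have hUU : U * star U = 1 := Matrix.mem_unitaryGroup_iff.mp hU
  have hUU' : star U * U = 1 := Matrix.mem_unitaryGroup_iff'.mp hU
  have hspec : A = U * Matrix.diagonal (RCLike.ofReal ∘ hH.eigenvalues) * star U :=
    hH.spectral_theorem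
  have hconj : 1 + A = U * Matrix.diagonal (fun i => 1 + (hH.eigenvalues i : ℂ)) * star U := by
    have hdiag : Matrix.diagonal (fun i => 1 + (hH.eigenvalues i : ℂ)) =
        1 + Matrix.diagonal (RCLike.ofReal ∘ hH.eigenvalues) := by
      rw [← Matrix.diagonal_one, ← Matrix.diagonal_add]; rfl
    rw [hdiag, Matrix.mul_add, Matrix.add_mul, Matrix.mul_one, hUU, ← hspec]
  have hdet : (1 + A).det = ∏ i, (1 + (hH.eigenvalues i : ℂ)) := by
    rw [hconj, Matrix.det_mul_right_comm, hUU, Matrix.one_mul, Matrix.det_diagonal]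
  have htr : A.trace = ∑ i, (hH.eigenvalues i : ℂ) := by
    conv_lhs => rw [hspec]
    rw [Matrix.trace_mul_cycle, hUU', Matrix.one_mul, Matrix.trace_diagonal]
    rfl
  have hnn : ∀ i ∈ Finset.univ, 0 ≤ hH.eigenvalues i := fun i _ => hA.eigenvalues_nonneg i
  obtain ⟨_, heqiff⟩ := aux_prod_one_add hH.eigenvalues Finset.univ hnn
  have hcast : (1 + A).det = 1 + A.trace ↔
      (∏ i, (1 + hH.eigenvalues i)) = 1 + ∑ i, hH.eigenvalues i := by
    rw [hdet, htr, ← Complex.ofReal_inj]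
    push_cast
    tauto
  rw [hcast, heqiff, hH.rank_eq_card_non_zero_eigs]
  rw [Fintype.card_le_one_iff]
  constructor
  · rintro h ⟨i, hi⟩ ⟨j, hj⟩
    by_contra hne
    have hij : i ≠ j := fun hij => hne (by simpa using hij)
    rcases h i (Finset.mem_univ i) j (Finset.mem_univ j) hij with h0 | h0
    · exact hi h0
    · exact hj h0
  · intro h i _ j _ hij
    by_contra hc
    push_neg at hc
    exact hij (by simpa using h ⟨i, hc.1⟩ ⟨j, hc.2⟩)
end

section
/- For a Hermitian PSD matrix E with Tr(E) = M, the rank-one condition rank(E) = 1 is equivalent to det(I + E) ≤ 1 + M (equivalently log det(I + E) ≤ log(1 + M)). -/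
open Matrix
open scoped ComplexOrder

/-!
Diagonalising `E`, its eigenvalues `λᵢ ≥ 0` satisfy `∑ λᵢ = M`, `det (1 + E) = ∏ (1 + λᵢ)`
and `rank E = #{i | λᵢ ≠ 0}`. Expanding the product,
`∏ (1 + λᵢ) = 1 + ∑ λᵢ + (nonnegative cross terms)`, and the cross terms all vanish exactly
when at most one `λᵢ` is nonzero.
-/

namespace Finset

variable {ι : Type*} {f : ι → ℝ}

theorem one_add_sum_le_prod_one_add (s : Finset ι) (hf : ∀ i ∈ s, 0 ≤ f i) :
    1 + ∑ i ∈ s, f i ≤ ∏ i ∈ s, (1 + f i) := by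
  induction s using Finset.cons_induction with
  | empty => simp
  | cons a s ha ih =>
    rw [sum_cons, prod_cons]
    have hfa := hf a (mem_cons_self a s)
    have hs := ih fun i hi => hf i (mem_cons_of_mem hi)
    have hsum := sum_nonneg fun i hi => hf i (mem_cons_of_mem hi)
    nlinarith

theorem one_add_sum_add_mul_sum_erase_le_prod_one_add [DecidableEq ι] {s : Finset ι}
    (hf : ∀ i ∈ s, 0 ≤ f i) {a : ι} (ha : a ∈ s) :
    1 + ∑ i ∈ s, f i + f a * ∑ i ∈ s.erase a, f i ≤ ∏ i ∈ s, (1 + f i) := by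
  have hrest := one_add_sum_le_prod_one_add (s.erase a) fun i hi => hf i (mem_of_mem_erase hi)
  rw [← add_sum_erase s f ha, ← mul_prod_erase s (fun i => 1 + f i) ha]
  nlinarith [hf a ha]

end Finset

theorem card_ne_zero_eq_one_iff_prod_one_add_le {ι : Type*} [Fintype ι] {f : ι → ℝ}
    (hf : ∀ i, 0 ≤ f i) (hf₀ : f ≠ 0) :
    Fintype.card {i // f i ≠ 0} = 1 ↔ ∏ i, (1 + f i) ≤ 1 + ∑ i, f i := by
  classical
  constructor
  · intro hcard
    obtain ⟨⟨a, _⟩, hunique⟩ := Fintype.card_eq_one_iff.mp hcard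
    have hzero : ∀ b ≠ a, f b = 0 := fun b hb => by
      by_contra h
      exact hb (congrArg Subtype.val (hunique ⟨b, h⟩))
    rw [Finset.prod_eq_single a (fun b _ hb => by simp [hzero b hb]) (by simp),
      Finset.sum_eq_single a (fun b _ hb => hzero b hb) (by simp)]
  · intro hle
    refine le_antisymm (Fintype.card_le_one_iff.mpr ?_) ?_
    · rintro ⟨a, ha⟩ ⟨b, hb⟩
      by_contra hab
      have hab : a ≠ b := fun h => hab (Subtype.ext h)
      have hb_mem : b ∈ Finset.univ.erase a := Finset.mem_erase.mpr ⟨hab.symm, Finset.mem_univ b⟩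
      have hpos : 0 < f a * ∑ i ∈ Finset.univ.erase a, f i :=
        mul_pos ((hf a).lt_of_ne' ha) <|
          ((hf b).lt_of_ne' hb).trans_le (Finset.single_le_sum (fun i _ => hf i) hb_mem)
      have := Finset.one_add_sum_add_mul_sum_erase_le_prod_one_add (fun i _ => hf i)
        (Finset.mem_univ a)
      linarith
    · obtain ⟨a, ha⟩ := Function.ne_iff.mp hf₀
      exact Fintype.card_pos_iff.mpr ⟨⟨a, ha⟩⟩

namespace Matrix.IsHermitian

variable {𝕜 n : Type*} [RCLike 𝕜] [Fintype n] [DecidableEq n] {A : Matrix n n 𝕜}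

theorem det_one_add (hA : A.IsHermitian) : (1 + A).det = ∏ i, (1 + hA.eigenvalues i : 𝕜) := by
  conv_lhs =>
    rw [hA.spectral_theorem, ← map_one (Unitary.conjStarAlgAut 𝕜 _ hA.eigenvectorUnitary), ← map_add,
      ← diagonal_one, diagonal_add, Unitary.conjStarAlgAut_apply, det_mul_right_comm,
      ← Unitary.coe_star, Unitary.coe_mul_star_self, one_mul, det_diagonal]
  simp

end Matrix.IsHermitian

theorem rank_one_iff_det_le {M : ℕ}
    (E : Matrix (Fin M) (Fin M) ℂ) (hE : E.PosSemidef)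
    (htr : E.trace = (M : ℂ)) (hne : E ≠ 0) :
    E.rank = 1 ↔ (1 + E).det ≤ 1 + (M : ℂ) := by
  rw [hE.1.rank_eq_card_non_zero_eigs,
    card_ne_zero_eq_one_iff_prod_one_add_le hE.eigenvalues_nonneg
      (hE.1.eigenvalues_eq_zero_iff.not.mpr hne),
    hE.1.det_one_add, ← htr, hE.1.trace_eq_sum_eigenvalues]
  simp only [← RCLike.ofReal_le_ofReal (K := ℂ), RCLike.ofReal_add, RCLike.ofReal_one,
    RCLike.ofReal_prod, RCLike.ofReal_sum]
end
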